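/- Signed determinant formula valid for arbitrary (not necessarily well-centered) triangles: let x₀, x₁, x₂ be a positively oriented triangle in the Euclidean plane (i.e. det [[x₀¹, x₀², 1], [x₁¹, x₁², 1], [x₂¹, x₂², 1]] > 0) with circumcenter C = (x_c, y_c). Then the FEM coefficient d₀ = l₁·l₂·cos θ₀/(4|t|) satisfies d₀ = −(1/l₀²)·det [[x₁¹, x₁², 1], [x_c, y_c, 1], [x₂¹, x₂², 1]]; in particular the signed ratio e₀/l₀ computed from this determinant equals d₀ even when the circumcenter lies outside the triangle, where the right-hand side may take negative values. -/

import Mathlib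

/-!
Write `D` for the orientation determinant of `x₀x₁x₂`, so that `4|t| = 2D` and
`l₁ l₂ cos θ₀ = ⟪x₁ - x₀, x₂ - x₀⟫`. The claim then reads
`⟪x₁ - x₀, x₂ - x₀⟫ l₀² = -2 D det(x₁, C, x₂)`, a polynomial identity in the coordinates that
holds modulo the circumcenter equations `|C - x₀|² = |C - x₁|² = |C - x₂|²`
(which are linear in `C`).
-/

open EuclideanGeometry Real MeasureTheory Set Pointwise

theorem Matrix.det_fin_three_of_col_one {R : Type*} [CommRing R] (a₁ a₂ b₁ b₂ c₁ c₂ : R) :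
    !![a₁, a₂, 1; b₁, b₂, 1; c₁, c₂, 1].det = (b₁ - a₁) * (c₂ - a₂) - (c₁ - a₁) * (b₂ - a₂) := by
  simp only [Matrix.det_fin_three, Matrix.of_apply, Matrix.cons_val', Matrix.cons_val_zero,
    Matrix.cons_val_one, Matrix.cons_val, Matrix.cons_val_fin_one]
  ring

theorem EuclideanGeometry.dist_mul_dist_mul_cos_angle {V P : Type*} [NormedAddCommGroup V]
    [InnerProductSpace ℝ V] [MetricSpace P] [NormedAddTorsor V P] (p₁ p₂ p₃ : P) :
    dist p₂ p₃ * dist p₂ p₁ * Real.cos (∠ p₁ p₂ p₃) = inner ℝ (p₁ -ᵥ p₂) (p₃ -ᵥ p₂) := by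
  rw [dist_comm p₂ p₃, dist_comm p₂ p₁, dist_eq_norm_vsub V, dist_eq_norm_vsub V,
    EuclideanGeometry.angle, ← InnerProductGeometry.cos_angle_mul_norm_mul_norm]
  ring

theorem volume_stdTriangle_prod :
    volume {p : ℝ × ℝ | 0 ≤ p.1 ∧ 0 ≤ p.2 ∧ p.1 + p.2 ≤ 1} = ENNReal.ofReal (1 / 2) := by
  set S := {p : ℝ × ℝ | 0 ≤ p.1 ∧ 0 ≤ p.2 ∧ p.1 + p.2 ≤ 1}
  have hS : MeasurableSet S := by measurability
  have hslice (x : ℝ) :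
      volume (Prod.mk x ⁻¹' S) = (Icc 0 1).indicator (fun x => ENNReal.ofReal (1 - x)) x := by
    by_cases hx : x ∈ Icc (0 : ℝ) 1
    · have hslice_eq : Prod.mk x ⁻¹' S = Icc 0 (1 - x) := by
        ext y
        simp only [S, mem_preimage, mem_ofPred_eq, mem_Icc]
        constructor
        · rintro ⟨-, h1, h2⟩
          exact ⟨h1, by linarith⟩
        · rintro ⟨h1, h2⟩
          exact ⟨hx.1, h1, by linarith⟩
      rw [indicator_of_mem hx, hslice_eq, Real.volume_Icc, sub_zero]
    · have hslice_eq : Prod.mk x ⁻¹' S = ∅ := by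
        ext y
        simp only [S, mem_preimage, mem_ofPred_eq, mem_empty_iff_false, iff_false]
        rintro ⟨h0, h1, h2⟩
        exact hx ⟨h0, by linarith⟩
      rw [indicator_of_notMem hx, hslice_eq, measure_empty]
  have hint : ∫ x in Icc (0 : ℝ) 1, (1 - x) = 1 / 2 := by
    rw [integral_Icc_eq_integral_Ioc, ← intervalIntegral.integral_of_le zero_le_one,
      intervalIntegral.integral_comp_sub_left (fun x => x)]
    norm_num [integral_id]
  rw [Measure.volume_eq_prod, Measure.prod_apply hS]
  simp only [hslice]
  rw [lintegral_indicator measurableSet_Icc, ← hint, ofReal_integral_eq_lintegral_ofReal]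
  · exact (continuous_const.sub continuous_id).integrableOn_Icc
  · exact (ae_restrict_iff' measurableSet_Icc).2 (.of_forall fun x hx => by simp [hx.2])

namespace EuclideanSpace

theorem volume_stdTriangle :
    volume {p : EuclideanSpace ℝ (Fin 2) | 0 ≤ p 0 ∧ 0 ≤ p 1 ∧ p 0 + p 1 ≤ 1} =
      ENNReal.ofReal (1 / 2) := by
  have hS : MeasurableSet {p : ℝ × ℝ | 0 ≤ p.1 ∧ 0 ≤ p.2 ∧ p.1 + p.2 ≤ 1} := by measurability
  have he := (volume_preserving_finTwoArrow ℝ).comp (PiLp.volume_preserving_ofLp (ι := Fin 2))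
  rw [← volume_stdTriangle_prod, ← he.measure_preimage hS.nullMeasurableSet]
  rfl

theorem convexHull_zero_single_single :
    convexHull ℝ {0, single 0 1, single 1 1} =
      {p : EuclideanSpace ℝ (Fin 2) | 0 ≤ p 0 ∧ 0 ≤ p 1 ∧ p 0 + p 1 ≤ 1} := by
  refine Subset.antisymm (convexHull_min ?_ ?_) ?_
  · rintro p (rfl | rfl | rfl) <;> simp
  · intro p hp q hq a b ha hb hab
    simp only [mem_ofPred_eq, PiLp.add_apply, PiLp.smul_apply, smul_eq_mul] at *
    exact ⟨by nlinarith, by nlinarith, by nlinarith⟩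
  · rintro p ⟨h0, h1, h01⟩
    have hp : p = ∑ i, ![1 - p 0 - p 1, p 0, p 1] i •
        ![(0 : EuclideanSpace ℝ (Fin 2)), single 0 1, single 1 1] i := by
      ext i
      fin_cases i <;> simp [Fin.sum_univ_three]
    rw [hp]
    refine (convex_convexHull ℝ _).sum_mem (fun i _ => ?_) ?_
      (fun i _ => subset_convexHull ℝ _ ?_)
    · fin_cases i <;>
        simp only [Fin.zero_eta, Fin.mk_one, Fin.reduceFinMk, Matrix.cons_val_zero,
          Matrix.cons_val_one, Matrix.cons_val] <;>
        linarith
    · simp only [Fin.sum_univ_three, Matrix.cons_val_zero, Matrix.cons_val_one, Matrix.cons_val]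
      ring
    · fin_cases i <;> simp

theorem volume_convexHull_triple (a b c : EuclideanSpace ℝ (Fin 2)) :
    volume (convexHull ℝ {a, b, c}) =
      ENNReal.ofReal (|!![a 0, a 1, 1; b 0, b 1, 1; c 0, c 1, 1].det| / 2) := by
  set A := !![b 0 - a 0, c 0 - a 0; b 1 - a 1, c 1 - a 1]
  have hb : A.toEuclideanLin (single 0 1) = b - a := by
    ext i
    fin_cases i <;> simp [A]
  have hc : A.toEuclideanLin (single 1 1) = c - a := by
    ext i
    fin_cases i <;> simp [A]
  have hhull : convexHull ℝ {a, b, c} =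
      a +ᵥ A.toEuclideanLin '' {p | 0 ≤ p 0 ∧ 0 ≤ p 1 ∧ p 0 + p 1 ≤ 1} := by
    rw [← convexHull_zero_single_single, LinearMap.image_convexHull, ← convexHull_vadd]
    simp [image_insert_eq, vadd_set_insert, hb, hc]
  rw [hhull, measure_vadd, Measure.addHaar_image_linearMap, volume_stdTriangle,
    ← ENNReal.ofReal_mul (abs_nonneg _), LinearMap.det_toLpLin, Matrix.det_fin_two_of,
    Matrix.det_fin_three_of_col_one]
  ring_nf

theorem dist_sq_fin_two (x y : EuclideanSpace ℝ (Fin 2)) :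
    dist x y ^ 2 = (x 0 - y 0) ^ 2 + (x 1 - y 1) ^ 2 := by
  rw [EuclideanSpace.dist_eq, Real.sq_sqrt (by positivity)]
  simp [Fin.sum_univ_two, Real.dist_eq, sq_abs]

theorem inner_fin_two (x y : EuclideanSpace ℝ (Fin 2)) :
    inner ℝ x y = x 0 * y 0 + x 1 * y 1 := by
  simp only [PiLp.inner_apply, RCLike.inner_apply, conj_trivial, Fin.sum_univ_two]
  ring

theorem inner_mul_dist_sq_eq_neg_two_mul_det_mul_det {x₀ x₁ x₂ C : EuclideanSpace ℝ (Fin 2)}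
    (h01 : dist C x₀ = dist C x₁) (h02 : dist C x₀ = dist C x₂) :
    inner ℝ (x₁ - x₀) (x₂ - x₀) * dist x₁ x₂ ^ 2 =
      -(2 * !![x₀ 0, x₀ 1, 1; x₁ 0, x₁ 1, 1; x₂ 0, x₂ 1, 1].det *
        !![x₁ 0, x₁ 1, 1; C 0, C 1, 1; x₂ 0, x₂ 1, 1].det) := by
  have h01' := congrArg (· ^ 2) h01
  have h02' := congrArg (· ^ 2) h02
  simp only [dist_sq_fin_two] at h01' h02'
  rw [inner_fin_two, dist_sq_fin_two, Matrix.det_fin_three_of_col_one,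
    Matrix.det_fin_three_of_col_one]
  simp only [PiLp.sub_apply]
  linear_combination
    ((x₂ 1 - x₁ 1) * (x₂ 1 - x₀ 1) + (x₂ 0 - x₁ 0) * (x₂ 0 - x₀ 0)) * h01' +
      ((x₁ 0 - x₀ 0) * (x₁ 0 - x₂ 0) + (x₀ 1 - x₁ 1) * (x₂ 1 - x₁ 1)) * h02'

end EuclideanSpace

theorem fem_coeff_eq_signed_det_general
    (x₀ x₁ x₂ C : EuclideanSpace ℝ (Fin 2))
    (h01 : dist C x₀ = dist C x₁) (h02 : dist C x₀ = dist C x₂)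
    (horient : 0 < Matrix.det !![x₀ 0, x₀ 1, 1; x₁ 0, x₁ 1, 1; x₂ 0, x₂ 1, 1]) :
    dist x₀ x₂ * dist x₀ x₁ * Real.cos (∠ x₁ x₀ x₂) /
        (4 * (volume (convexHull ℝ {x₀, x₁, x₂})).toReal) =
      -(1 / (dist x₁ x₂) ^ 2) *
        Matrix.det !![x₁ 0, x₁ 1, 1; C 0, C 1, 1; x₂ 0, x₂ 1, 1] := by
  have hl₀ : dist x₁ x₂ ≠ 0 := by
    intro h
    rw [dist_eq_zero.1 h, Matrix.det_fin_three_of_col_one] at horient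
    linarith
  rw [dist_mul_dist_mul_cos_angle, vsub_eq_sub, vsub_eq_sub,
    EuclideanSpace.volume_convexHull_triple, ENNReal.toReal_ofReal (by positivity),
    abs_of_pos horient]
  field_simp
  linear_combination 2 * EuclideanSpace.inner_mul_dist_sq_eq_neg_two_mul_det_mul_det h01 h02

/-- Signed determinant formula, valid for arbitrary (not necessarily well-centered)
triangles: if `x₀x₁x₂` is positively oriented (the determinant with rows
`(x₀ 0, x₀ 1, 1)`, `(x₁ 0, x₁ 1, 1)`, `(x₂ 0, x₂ 1, 1)` is positive) and `C` is the
circumcenter, then the FEM coefficient `d₀ = l₁ * l₂ * cos θ₀ / (4 * |t|)` equals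
`-(1/l₀²)` times the determinant with rows `(x₁ 0, x₁ 1, 1)`, `(C 0, C 1, 1)`,
`(x₂ 0, x₂ 1, 1)`; the right-hand side may take negative values. -/
theorem fem_coeff_eq_signed_det
    (x₀ x₁ x₂ C : EuclideanSpace ℝ (Fin 2))
    (hind : AffineIndependent ℝ ![x₀, x₁, x₂])
    (h01 : dist C x₀ = dist C x₁) (h02 : dist C x₀ = dist C x₂)
    (horient : 0 < Matrix.det !![x₀ 0, x₀ 1, 1; x₁ 0, x₁ 1, 1; x₂ 0, x₂ 1, 1]) :
    dist x₀ x₂ * dist x₀ x₁ * Real.cos (∠ x₁ x₀ x₂) /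
        (4 * (volume (convexHull ℝ {x₀, x₁, x₂})).toReal) =
      -(1 / (dist x₁ x₂) ^ 2) *
        Matrix.det !![x₁ 0, x₁ 1, 1; C 0, C 1, 1; x₂ 0, x₂ 1, 1] :=
  fem_coeff_eq_signed_det_general x₀ x₁ x₂ C h01 h02 horient
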